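/- Let n > m > ℓ ≥ 2 be integers and let H = ⟨a, b, c | a^(2^n) = 1, b^(2^m) = a^(2^m), c^(2^ℓ) = 1, [b,a] = c, [c,a] = c^(-2), [c,b] = c^(-2)⟩. Let S be a commutative ring of characteristic 4 with a maximal ideal n satisfying 2 ∈ n and 2 ∉ n². Set A = a − 1, B = b − 1 in SH and Θ = Δ(SH : n). Then for all α, β ∈ S one has (αA + βB)^(2^(m+1)) ≡ (α + β)^(2^(m+1))·A^(2^(m+1)) (mod Θ^(1 + 2^(m+1))). -/

import Mathlib

/-- Relators of the group `H` from the paper: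
`H = ⟨a,b,c ∣ a^(2^n) = 1, b^(2^m) = a^(2^m), c^(2^l) = 1, [b,a] = c, [c,a] = c⁻², [c,b] = c⁻²⟩`,
where `[g,h] = g⁻¹h⁻¹gh`.  Generators: `0 ↦ a`, `1 ↦ b`, `2 ↦ c`. -/
def hrels (n m l : ℕ) : Set (FreeGroup (Fin 3)) :=
  {FreeGroup.of 0 ^ 2 ^ n, FreeGroup.of 1 ^ 2 ^ m * (FreeGroup.of 0 ^ 2 ^ m)⁻¹,
   FreeGroup.of 2 ^ 2 ^ l,
   (FreeGroup.of 1)⁻¹ * (FreeGroup.of 0)⁻¹ * FreeGroup.of 1 * FreeGroup.of 0 * (FreeGroup.of 2)⁻¹,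
   (FreeGroup.of 2)⁻¹ * (FreeGroup.of 0)⁻¹ * FreeGroup.of 2 * FreeGroup.of 0 * FreeGroup.of 2 ^ 2,
   (FreeGroup.of 2)⁻¹ * (FreeGroup.of 1)⁻¹ * FreeGroup.of 2 * FreeGroup.of 1 * FreeGroup.of 2 ^ 2}

/-- The group `H` of the paper. -/
def GrpH (n m l : ℕ) : Type := PresentedGroup (hrels n m l)

instance (n m l : ℕ) : Group (GrpH n m l) := by unfold GrpH; infer_instance

/-- The augmentation map `ε : SH → S`, sending `Σ α_h h` to `Σ α_h`. -/
noncomputable def aug (S : Type) [CommRing S] (G : Type) [Group G] :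
    MonoidAlgebra S G →ₐ[S] S := MonoidAlgebra.lift S S G 1

/-- The relative augmentation ideal `Δ(SG : n) = ε⁻¹(n) = {x ∈ SG : ε(x) ∈ n}`. -/
noncomputable def relAugIdeal (S : Type) [CommRing S] (nn : Ideal S) (G : Type) [Group G] :
    Ideal (MonoidAlgebra S G) := Ideal.comap (aug S G) nn

/-- `A = a - 1 ∈ SH`. -/
noncomputable def elA (S : Type) [CommRing S] (n m l : ℕ) : MonoidAlgebra S (GrpH n m l) :=
  MonoidAlgebra.of S (GrpH n m l) (PresentedGroup.of 0) - 1
/-- `B = b - 1 ∈ SH`. -/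
noncomputable def elB (S : Type) [CommRing S] (n m l : ℕ) : MonoidAlgebra S (GrpH n m l) :=
  MonoidAlgebra.of S (GrpH n m l) (PresentedGroup.of 1) - 1
/-- `C = c - 1 ∈ SH`. -/
noncomputable def elC (S : Type) [CommRing S] (n m l : ℕ) : MonoidAlgebra S (GrpH n m l) :=
  MonoidAlgebra.of S (GrpH n m l) (PresentedGroup.of 2) - 1

/-!
Squaring is additive modulo the next power of `Θ` up to anticommutators: if `x, y, z ∈ Θ^N`,
`D ≡ x + y + z (mod Θ^(N+1))` and the pairwise anticommutators `xy + yx` lie in `Θ^(2N+1)`,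
then `D² ≡ x² + y² + z² (mod Θ^(2N+1))`. Since `2 ∈ Θ`, an anticommutator of elements of `Θ^i`
and `Θ^j` lies in `Θ^(i+j+1)` as soon as their commutator does. Starting from
`(αA + βB)² ≡ (αA)² + (βB)² + αβC (mod Θ³)`, where `C = c - 1 ∈ Θ²` because `c` is a commutator,
induction gives `(αA + βB)^(2^(k+1)) ≡ (αA)^(2^(k+1)) + (βB)^(2^(k+1)) + (αβC)^(2^k)`
modulo `Θ^(2^(k+1)+1)`. The commutator conditions hold because `a²` and `b²` are central and, as
`4 = 0`, `(x - 1)^(2^(k+1)) = x^(2^(k+1)) + 2x^(2^k) + 1`: all the powers involved commute, except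
that `[A², C] = 2[a, c] = 2ac⁻¹C²`, which still lies in `Θ⁵`.

At `k = m`, `b^(2^m) = a^(2^m)` gives `B^(2^(m+1)) = A^(2^(m+1))`, `c^(2^(m-1)) = 1` gives
`C^(2^m) = 1 + 2 + 1 = 0`, and `(α + β)^(2^(m+1)) = α^(2^(m+1)) + β^(2^(m+1)) + 2(αβ)^(2^m)`, whose
last term only contributes `2A^(2^(m+1)) ∈ Θ^(2^(m+1)+1)`.
-/

namespace Ideal

variable {R : Type*} [Ring R] {I : Ideal R} [I.IsTwoSided]

theorem mul_mem_pow_of_le {x y : R} {i j k : ℕ} (hx : x ∈ I ^ i) (hy : y ∈ I ^ j)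
    (hk : k ≤ i + j) : x * y ∈ I ^ k :=
  pow_le_pow_right hk (IsTwoSided.pow_add (I := I) i j ▸ mul_mem_mul hx hy)

theorem mul_mem_pow_succ {x y : R} {j : ℕ} (hx : x ∈ I) (hy : y ∈ I ^ j) : x * y ∈ I ^ (j + 1) :=
  (IsTwoSided.pow_succ (I := I) j).symm ▸ mul_mem_mul hx hy

theorem pow_mem_pow_mul {x : R} {i : ℕ} (hx : x ∈ I ^ i) (t : ℕ) : x ^ t ∈ I ^ (i * t) := by
  induction t with
  | zero => simp [Submodule.pow_zero]
  | succ t ih => rw [pow_succ]; exact mul_mem_pow_of_le ih hx (by rw [Nat.mul_succ])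

theorem mul_add_mul_mem_of_mul_sub_mul_mem {x y : R} {i j k : ℕ} (h2 : (2 : R) ∈ I)
    (hx : x ∈ I ^ i) (hy : y ∈ I ^ j) (hk : k ≤ i + j + 1) (h : x * y - y * x ∈ I ^ k) :
    x * y + y * x ∈ I ^ k := by
  have h2xy : 2 * (x * y) ∈ I ^ k :=
    pow_le_pow_right hk (mul_mem_pow_succ h2 (mul_mem_pow_of_le hx hy le_rfl))
  simpa [two_mul] using sub_mem h2xy h

theorem smul_mul_add_smul_mul_mem {S : Type*} [CommSemiring S] [Algebra S R] {J : Ideal R}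
    {x y : R} (r s : S) (h : x * y + y * x ∈ J) : (r • x) * (s • y) + (s • y) * (r • x) ∈ J := by
  rw [smul_mul_smul_comm, smul_mul_smul_comm, mul_comm s r, ← smul_add]
  exact Submodule.smul_of_tower_mem _ _ h

theorem sq_sub_sum_sq_mem {D x y z : R} {N : ℕ} (hx : x ∈ I ^ N) (hy : y ∈ I ^ N)
    (hz : z ∈ I ^ N) (hD : D - (x + y + z) ∈ I ^ (N + 1))
    (hxy : x * y + y * x ∈ I ^ (2 * N + 1)) (hxz : x * z + z * x ∈ I ^ (2 * N + 1))
    (hyz : y * z + z * y ∈ I ^ (2 * N + 1)) :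
    D ^ 2 - (x ^ 2 + y ^ 2 + z ^ 2) ∈ I ^ (2 * N + 1) := by
  set e := D - (x + y + z)
  have hX : x + y + z ∈ I ^ N := add_mem (add_mem hx hy) hz
  have hexp : D ^ 2 - (x ^ 2 + y ^ 2 + z ^ 2) =
      (x * y + y * x) + (x * z + z * x) + (y * z + z * y) +
        ((x + y + z) * e + e * (x + y + z) + e * e) := by
    rw [show D = x + y + z + e by simp [e]]; noncomm_ring
  rw [hexp]
  refine add_mem (add_mem (add_mem hxy hxz) hyz) (add_mem (add_mem ?_ ?_) ?_)
  · exact mul_mem_pow_of_le hX hD (by omega)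
  · exact mul_mem_pow_of_le hD hX (by omega)
  · exact mul_mem_pow_of_le hD hD (by omega)

theorem add_pow_two_pow_sub_mem {u v w : R} (hu : u ∈ I) (hv : v ∈ I) (hw : w ∈ I ^ 2)
    (h₀ : u * v + v * u - w ∈ I ^ 3)
    (huv : ∀ k, u ^ 2 ^ (k + 1) * v ^ 2 ^ (k + 1) + v ^ 2 ^ (k + 1) * u ^ 2 ^ (k + 1) ∈
      I ^ (2 ^ (k + 2) + 1))
    (huw : ∀ k, u ^ 2 ^ (k + 1) * w ^ 2 ^ k + w ^ 2 ^ k * u ^ 2 ^ (k + 1) ∈ I ^ (2 ^ (k + 2) + 1))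
    (hvw : ∀ k, v ^ 2 ^ (k + 1) * w ^ 2 ^ k + w ^ 2 ^ k * v ^ 2 ^ (k + 1) ∈ I ^ (2 ^ (k + 2) + 1))
    (k : ℕ) :
    (u + v) ^ 2 ^ (k + 1) - (u ^ 2 ^ (k + 1) + v ^ 2 ^ (k + 1) + w ^ 2 ^ k) ∈
      I ^ (2 ^ (k + 1) + 1) := by
  induction k with
  | zero =>
    rw [zero_add, pow_one, pow_zero, pow_one]
    convert h₀ using 1
    noncomm_ring
  | succ k ih =>
    have hsq : ∀ y : R, y ^ 2 ^ (k + 1 + 1) = (y ^ 2 ^ (k + 1)) ^ 2 := fun y => by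
      rw [pow_succ 2 (k + 1), pow_mul]
    have hN : 2 ^ (k + 1 + 1) = 2 * 2 ^ (k + 1) := pow_succ' 2 (k + 1)
    have hw' : w ^ 2 ^ k ∈ I ^ 2 ^ (k + 1) := pow_succ' 2 k ▸ pow_mem_pow_mul hw _
    rw [hsq, hsq u, hsq v, pow_succ 2 k, pow_mul w, ← pow_succ, hN]
    exact sq_sub_sum_sq_mem (pow_mem_pow hu _) (pow_mem_pow hv _) hw' ih
      (hN ▸ huv k) (hN ▸ huw k) (hN ▸ hvw k)

end Ideal

section CharFour

theorem ofNat_four_eq_zero {S R : Type*} [CommSemiring S] [Semiring R] [Algebra S R]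
    (h4 : (4 : S) = 0) : (4 : R) = 0 := by
  rw [← map_ofNat (algebraMap S R) 4, h4, map_zero]

theorem add_pow_two_pow {S : Type*} [CommRing S] (h4 : (4 : S) = 0) (x y : S) (k : ℕ) :
    (x + y) ^ 2 ^ (k + 1) = x ^ 2 ^ (k + 1) + 2 * (x * y) ^ 2 ^ k + y ^ 2 ^ (k + 1) := by
  induction k with
  | zero => ring
  | succ k ih =>
    have hsq : ∀ z : S, z ^ 2 ^ (k + 1 + 1) = (z ^ 2 ^ (k + 1)) ^ 2 := fun z => by
      rw [pow_succ 2 (k + 1), pow_mul]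
    have hT : (x * y) ^ 2 ^ (k + 1) = ((x * y) ^ 2 ^ k) ^ 2 := by rw [pow_succ, pow_mul]
    rw [hsq, hsq x, hsq y, ih, hT]
    set P := x ^ 2 ^ (k + 1)
    set Q := y ^ 2 ^ (k + 1)
    set T := (x * y) ^ 2 ^ k
    have hPQ : P * Q = T ^ 2 := by rw [← mul_pow, ← pow_mul, ← pow_succ]
    linear_combination 2 * hPQ + (T ^ 2 + P * T + Q * T) * h4

variable {R : Type*} [Ring R]

theorem sub_one_pow_two_pow (h4 : (4 : R) = 0) (x : R) (k : ℕ) :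
    (x - 1) ^ 2 ^ (k + 1) = x ^ 2 ^ (k + 1) + 2 * x ^ 2 ^ k + 1 := by
  induction k with
  | zero =>
    calc (x - 1) ^ 2 ^ (0 + 1) = x ^ 2 + 2 * x + 1 - 4 * x := by
          rw [zero_add, pow_one]; noncomm_ring
      _ = _ := by rw [h4]; simp
  | succ k ih =>
    set P := x ^ 2 ^ k
    have hsq : ∀ y : R, y ^ 2 ^ (k + 1 + 1) = (y ^ 2 ^ (k + 1)) ^ 2 := fun y => by
      rw [pow_succ 2 (k + 1), pow_mul]
    have hP : x ^ 2 ^ (k + 1) = P ^ 2 := by rw [pow_succ, pow_mul]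
    rw [hsq, hsq, ih, hP]
    calc (P ^ 2 + 2 * P + 1) ^ 2 = (P ^ 2) ^ 2 + 2 * P ^ 2 + 1 + 4 * (P ^ 3 + P ^ 2 + P) := by
          noncomm_ring
      _ = _ := by rw [h4, zero_mul, add_zero]

theorem sub_one_pow_two_pow_mul_sub_mul (h4 : (4 : R) = 0) {x y : R} (h : Commute (x ^ 2) y)
    (k : ℕ) :
    (x - 1) ^ 2 ^ (k + 1) * y - y * (x - 1) ^ 2 ^ (k + 1) =
      2 * (x ^ 2 ^ k * y - y * x ^ 2 ^ k) := by
  have hP : Commute (x ^ 2 ^ (k + 1)) y := by rw [pow_succ', pow_mul]; exact h.pow_left _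
  rw [sub_one_pow_two_pow h4]
  calc _ = (x ^ 2 ^ (k + 1) * y - y * x ^ 2 ^ (k + 1)) + 2 * (x ^ 2 ^ k * y - y * x ^ 2 ^ k) := by
        noncomm_ring
    _ = _ := by rw [hP.eq, sub_self, zero_add]

theorem commute_sub_one_pow_two_pow_add_two (h4 : (4 : R) = 0) {x y : R}
    (h : Commute (x ^ 2) y) (k : ℕ) : Commute ((x - 1) ^ 2 ^ (k + 2)) y := by
  have hxk : Commute (x ^ 2 ^ (k + 1)) y := by rw [pow_succ', pow_mul]; exact h.pow_left _
  have := sub_one_pow_two_pow_mul_sub_mul h4 h (k + 1)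
  rw [hxk.eq, sub_self, mul_zero] at this
  exact sub_eq_zero.mp this

theorem commute_sub_one_pow_two_pow (h4 : (4 : R) = 0) {x y : R}
    (hxy : Commute (x ^ 2) y) (hyx : Commute (y ^ 2) x) (k : ℕ) :
    Commute ((x - 1) ^ 2 ^ (k + 1)) ((y - 1) ^ 2 ^ (k + 1)) := by
  have e₁ := sub_one_pow_two_pow_mul_sub_mul h4
    ((hxy.sub_right (Commute.one_right _)).pow_right (2 ^ (k + 1))) k
  have e₂ := sub_one_pow_two_pow_mul_sub_mul h4 (hyx.pow_right (2 ^ k)) k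
  rw [commute_iff_eq, ← sub_eq_zero, e₁, ← neg_sub, e₂]
  calc _ = -(4 * (y ^ 2 ^ k * x ^ 2 ^ k - x ^ 2 ^ k * y ^ 2 ^ k)) := by noncomm_ring
    _ = 0 := by rw [h4, zero_mul, neg_zero]

end CharFour

section Group

variable {G : Type*} [Group G] {x y z : G}

theorem inv_mul_eq_mul_inv_inv (h : z * x = x * z⁻¹) : z⁻¹ * x = x * z⁻¹⁻¹ :=
  calc z⁻¹ * x = z⁻¹ * (x * z⁻¹) * z := by group
    _ = z⁻¹ * (z * x) * z := by rw [h]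
    _ = x * z⁻¹⁻¹ := by group

theorem commute_sq_of_mul_eq_mul_inv (h : z * x = x * z⁻¹) : Commute (x ^ 2) z := by
  have h' : z⁻¹ * x = x * z := by simpa using inv_mul_eq_mul_inv_inv h
  symm
  calc z * x ^ 2 = x * (z⁻¹ * x) := by rw [pow_two, ← mul_assoc, h]; group
    _ = x ^ 2 * z := by rw [h', pow_two, mul_assoc]

theorem commute_sq_of_mul_eq_mul_mul (hyx : y * x = x * y * z) (hzx : z * x = x * z⁻¹) :
    Commute (x ^ 2) y := by
  symm
  calc y * x ^ 2 = x * y * (z * x) := by rw [pow_two, ← mul_assoc, hyx]; group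
    _ = x * (y * x) * z⁻¹ := by rw [hzx]; group
    _ = x ^ 2 * y := by rw [hyx, pow_two]; group

end Group

section GroupAlgebra

open MonoidAlgebra

variable (S : Type) [CommRing S] (nn : Ideal S) (G : Type) [Group G]

local notation "Θ" => relAugIdeal S nn G

instance relAugIdeal.isTwoSided : (Θ).IsTwoSided := by
  unfold relAugIdeal; infer_instance

variable {S nn G}

theorem aug_of (g : G) : aug S G (of S G g) = 1 := by
  rw [aug, lift_of]; rfl

theorem of_sub_one_mem_relAugIdeal (g : G) : of S G g - 1 ∈ Θ := by
  rw [relAugIdeal, Ideal.mem_comap, map_sub, map_one, aug_of, sub_self]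
  exact zero_mem nn

theorem two_mem_relAugIdeal (h2 : (2 : S) ∈ nn) : (2 : MonoidAlgebra S G) ∈ Θ := by
  rwa [relAugIdeal, Ideal.mem_comap, map_ofNat]

variable {x y z : G}

theorem of_sub_one_mul_sub_mul_of_mul_eq_mul_mul (h : y * x = x * y * z) :
    (of S G y - 1) * (of S G x - 1) - (of S G x - 1) * (of S G y - 1) =
      of S G (x * y) * (of S G z - 1) := by
  calc _ = of S G (y * x) - of S G (x * y) := by rw [map_mul, map_mul]; noncomm_ring
    _ = _ := by rw [h, map_mul _ (x * y), mul_sub, mul_one]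

theorem of_sub_one_mul_of_sub_one_mem_relAugIdeal_sq (x y : G) :
    (of S G x - 1) * (of S G y - 1) ∈ Θ ^ 2 :=
  Ideal.mul_mem_pow_succ (of_sub_one_mem_relAugIdeal x)
    ((Submodule.pow_one Θ).symm ▸ of_sub_one_mem_relAugIdeal y)

theorem of_sub_one_mem_relAugIdeal_sq (h : y * x = x * y * z) : of S G z - 1 ∈ Θ ^ 2 := by
  have hz : of S G z - 1 = of S G (x * y)⁻¹ *
      ((of S G y - 1) * (of S G x - 1) - (of S G x - 1) * (of S G y - 1)) := by
    rw [of_sub_one_mul_sub_mul_of_mul_eq_mul_mul h, ← mul_assoc, ← map_mul, inv_mul_cancel,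
      map_one, one_mul]
  rw [hz]
  exact Ideal.mul_mem_left _ _ (sub_mem (of_sub_one_mul_of_sub_one_mem_relAugIdeal_sq y x)
    (of_sub_one_mul_of_sub_one_mem_relAugIdeal_sq x y))

theorem mul_add_mul_sub_mem_relAugIdeal_pow_three (h2 : (2 : S) ∈ nn) (h : y * x = x * y * z) :
    (of S G x - 1) * (of S G y - 1) + (of S G y - 1) * (of S G x - 1) - (of S G z - 1) ∈
      Θ ^ 3 := by
  have hsplit :
      (of S G x - 1) * (of S G y - 1) + (of S G y - 1) * (of S G x - 1) - (of S G z - 1) =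
        2 * ((of S G x - 1) * (of S G y - 1)) + (of S G (x * y) - 1) * (of S G z - 1) := by
    rw [sub_one_mul (of S G (x * y)), ← of_sub_one_mul_sub_mul_of_mul_eq_mul_mul h]
    noncomm_ring
  rw [hsplit]
  exact add_mem
    (Ideal.mul_mem_pow_succ (two_mem_relAugIdeal h2)
      (of_sub_one_mul_of_sub_one_mem_relAugIdeal_sq x y))
    (Ideal.mul_mem_pow_succ (of_sub_one_mem_relAugIdeal _) (of_sub_one_mem_relAugIdeal_sq h))

theorem two_mul_of_mul_sub_mul_mem_relAugIdeal_pow_five (h4 : (4 : S) = 0)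
    (h2 : (2 : S) ∈ nn) (h : z * x = x * z⁻¹) (hz : of S G z - 1 ∈ Θ ^ 2) :
    2 * (of S G x * of S G z - of S G z * of S G x) ∈ Θ ^ 5 := by
  set Z := of S G z - 1
  have hcomm :
      of S G x * of S G z - of S G z * of S G x = of S G (x * z⁻¹) * (Z * Z + 2 * Z) := by
    calc _ = of S G (x * z⁻¹ * (z * z)) - of S G (x * z⁻¹) := by
          rw [← map_mul, ← map_mul, h, mul_assoc, inv_mul_cancel_left]
      _ = _ := by simp only [Z, map_mul]; noncomm_ring
  have hexp : 2 * (of S G (x * z⁻¹) * (Z * Z + 2 * Z)) =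
      of S G (x * z⁻¹) * (2 * (Z * Z)) + 4 * (of S G (x * z⁻¹) * Z) := by noncomm_ring
  rw [hcomm, hexp, ofNat_four_eq_zero h4, zero_mul, add_zero]
  exact Ideal.mul_mem_left _ _
    (Ideal.mul_mem_pow_succ (two_mem_relAugIdeal h2) (Ideal.mul_mem_pow_of_le hz hz le_rfl))

theorem sub_one_pow_mul_add_mul_mem_of_commute_sq (h4 : (4 : S) = 0) (h2 : (2 : S) ∈ nn)
    (hxy : Commute (x ^ 2) y) (hyx : Commute (y ^ 2) x) (k : ℕ) :
    (of S G x - 1) ^ 2 ^ (k + 1) * (of S G y - 1) ^ 2 ^ (k + 1) +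
      (of S G y - 1) ^ 2 ^ (k + 1) * (of S G x - 1) ^ 2 ^ (k + 1) ∈ Θ ^ (2 ^ (k + 2) + 1) := by
  have hc := commute_sub_one_pow_two_pow (ofNat_four_eq_zero h4)
    (by simpa only [map_pow] using hxy.map (of S G))
    (by simpa only [map_pow] using hyx.map (of S G)) k
  refine Ideal.mul_add_mul_mem_of_mul_sub_mul_mem (two_mem_relAugIdeal h2)
    (Ideal.pow_mem_pow (of_sub_one_mem_relAugIdeal x) _)
    (Ideal.pow_mem_pow (of_sub_one_mem_relAugIdeal y) _) ?_ ?_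
  · rw [pow_succ 2 (k + 1)]; omega
  · rw [hc.eq, sub_self]; exact zero_mem _

theorem sub_one_pow_mul_add_mul_mem_of_mul_eq_mul_inv (h4 : (4 : S) = 0) (h2 : (2 : S) ∈ nn)
    (h : z * x = x * z⁻¹) (hz : of S G z - 1 ∈ Θ ^ 2) (k : ℕ) :
    (of S G x - 1) ^ 2 ^ (k + 1) * (of S G z - 1) ^ 2 ^ k +
      (of S G z - 1) ^ 2 ^ k * (of S G x - 1) ^ 2 ^ (k + 1) ∈ Θ ^ (2 ^ (k + 2) + 1) := by
  have h4R : (4 : MonoidAlgebra S G) = 0 := ofNat_four_eq_zero h4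
  have hxz : Commute (of S G x ^ 2) (of S G z) := by
    simpa only [map_pow] using (commute_sq_of_mul_eq_mul_inv h).map (of S G)
  refine Ideal.mul_add_mul_mem_of_mul_sub_mul_mem (two_mem_relAugIdeal h2)
    (Ideal.pow_mem_pow (of_sub_one_mem_relAugIdeal x) _) (Ideal.pow_mem_pow_mul hz _) ?_ ?_
  · rw [pow_succ 2 (k + 1), pow_succ 2 k]; omega
  cases k with
  | zero =>
    have e := sub_one_pow_two_pow_mul_sub_mul h4R hxz 0
    simp only [zero_add, pow_zero, pow_one] at e ⊢
    have hZ : ∀ w : MonoidAlgebra S G,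
        w * (of S G z - 1) - (of S G z - 1) * w = w * of S G z - of S G z * w := fun w => by
      noncomm_ring
    rw [hZ, e]
    exact two_mul_of_mul_sub_mul_mem_relAugIdeal_pow_five h4 h2 h hz
  | succ k =>
    have hc := ((commute_sub_one_pow_two_pow_add_two h4R hxz k).sub_right
      (Commute.one_right _)).pow_right (2 ^ (k + 1))
    rw [hc.eq, sub_self]; exact zero_mem _

end GroupAlgebra

namespace GrpH

variable (n m l : ℕ)

def a : GrpH n m l := PresentedGroup.of 0
def b : GrpH n m l := PresentedGroup.of 1
def c : GrpH n m l := PresentedGroup.of 2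

variable {n m l}

theorem b_pow_two_pow : b n m l ^ 2 ^ m = a n m l ^ 2 ^ m := by
  have h := PresentedGroup.mk_eq_mk_of_mul_inv_mem (rels := hrels n m l)
    (x := FreeGroup.of 1 ^ 2 ^ m) (y := FreeGroup.of 0 ^ 2 ^ m) (by simp [hrels])
  simp only [map_pow] at h
  exact h

theorem c_pow_two_pow_of_le {j : ℕ} (hj : l ≤ j) : c n m l ^ 2 ^ j = 1 := by
  have h := PresentedGroup.one_of_mem (rels := hrels n m l) (x := FreeGroup.of 2 ^ 2 ^ l)
    (by simp [hrels])
  rw [map_pow] at h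
  rw [← pow_mul_pow_sub 2 hj, pow_mul]
  exact (congrArg (· ^ 2 ^ (j - l)) h).trans (one_pow _)

theorem b_mul_a : b n m l * a n m l = a n m l * b n m l * c n m l := by
  have h := PresentedGroup.mk_eq_mk_of_mul_inv_mem (rels := hrels n m l)
    (x := (FreeGroup.of 1)⁻¹ * (FreeGroup.of 0)⁻¹ * FreeGroup.of 1 * FreeGroup.of 0)
    (y := FreeGroup.of 2) (by simp [hrels])
  simp only [map_mul, map_inv] at h
  change (b n m l)⁻¹ * (a n m l)⁻¹ * b n m l * a n m l = c n m l at h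
  rw [← h]; group

theorem of_two_mul_of_eq_mul_inv {i : Fin 3} (hi : (FreeGroup.of 2)⁻¹ * (FreeGroup.of i)⁻¹ *
      FreeGroup.of 2 * FreeGroup.of i * FreeGroup.of 2 ^ 2 ∈ hrels n m l) :
    (PresentedGroup.of 2 : PresentedGroup (hrels n m l)) * PresentedGroup.of i =
      PresentedGroup.of i * (PresentedGroup.of 2)⁻¹ := by
  have h := PresentedGroup.one_of_mem hi
  simp only [map_mul, map_inv, map_pow] at h
  set g : PresentedGroup (hrels n m l) := PresentedGroup.of i
  set z : PresentedGroup (hrels n m l) := PresentedGroup.of 2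
  change z⁻¹ * g⁻¹ * z * g * z ^ 2 = 1 at h
  calc _ = g * z * (z⁻¹ * g⁻¹ * z * g * z ^ 2) * z⁻¹ ^ 2 := by group
    _ = _ := by rw [h, mul_one]; group

theorem c_mul_a : c n m l * a n m l = a n m l * (c n m l)⁻¹ :=
  of_two_mul_of_eq_mul_inv (i := 0) (by simp [hrels])

theorem c_mul_b : c n m l * b n m l = b n m l * (c n m l)⁻¹ :=
  of_two_mul_of_eq_mul_inv (i := 1) (by simp [hrels])

variable {S : Type} [CommRing S] {nn : Ideal S}

local notation "Θ" => relAugIdeal S nn (GrpH n m l)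

theorem elC_mem_relAugIdeal_sq : elC S n m l ∈ Θ ^ 2 :=
  of_sub_one_mem_relAugIdeal_sq b_mul_a

theorem elB_pow_eq_elA_pow (h4 : (4 : S) = 0) :
    elB S n m l ^ 2 ^ (m + 1) = elA S n m l ^ 2 ^ (m + 1) := by
  have hb : MonoidAlgebra.of S _ (b n m l) ^ 2 ^ m = MonoidAlgebra.of S _ (a n m l) ^ 2 ^ m := by
    rw [← map_pow, ← map_pow, b_pow_two_pow]
  rw [elA, elB, sub_one_pow_two_pow (ofNat_four_eq_zero h4),
    sub_one_pow_two_pow (ofNat_four_eq_zero h4), pow_succ 2 m, pow_mul, pow_mul]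
  exact congrArg (fun t => t ^ 2 + 2 * t + 1) hb

theorem elC_pow_eq_zero (h4 : (4 : S) = 0) (hlm : l < m) : elC S n m l ^ 2 ^ m = 0 := by
  have hc : ∀ i, l ≤ i → MonoidAlgebra.of S _ (c n m l) ^ 2 ^ i = 1 := fun i hi => by
    rw [← map_pow, c_pow_two_pow_of_le hi, map_one]
  obtain ⟨j, rfl⟩ : ∃ j, m = j + 1 := ⟨m - 1, by omega⟩
  rw [show elC S n (j + 1) l = MonoidAlgebra.of S _ (c n (j + 1) l) - 1 from rfl,
    sub_one_pow_two_pow (ofNat_four_eq_zero h4), hc _ (by omega), hc _ (by omega), mul_one,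
    ← ofNat_four_eq_zero (R := MonoidAlgebra S (GrpH n (j + 1) l)) h4]
  norm_num

theorem smul_add_smul_pow_two_pow_sub_mem (h4 : (4 : S) = 0) (h2 : (2 : S) ∈ nn) (α β : S)
    (k : ℕ) :
    (α • elA S n m l + β • elB S n m l) ^ 2 ^ (k + 1) -
      ((α • elA S n m l) ^ 2 ^ (k + 1) + (β • elB S n m l) ^ 2 ^ (k + 1) +
        ((α * β) • elC S n m l) ^ 2 ^ k) ∈ Θ ^ (2 ^ (k + 1) + 1) := by
  have hab : Commute (a n m l ^ 2) (b n m l) := commute_sq_of_mul_eq_mul_mul b_mul_a c_mul_a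
  have hba : Commute (b n m l ^ 2) (a n m l) :=
    commute_sq_of_mul_eq_mul_mul (by rw [b_mul_a]; group) (inv_mul_eq_mul_inv_inv c_mul_b)
  refine Ideal.add_pow_two_pow_sub_mem
    (Submodule.smul_of_tower_mem _ α (of_sub_one_mem_relAugIdeal (a n m l)))
    (Submodule.smul_of_tower_mem _ β (of_sub_one_mem_relAugIdeal (b n m l)))
    (Submodule.smul_of_tower_mem _ _ elC_mem_relAugIdeal_sq) ?_ (fun k => ?_) (fun k => ?_)
    (fun k => ?_) k
  · rw [smul_mul_smul_comm, smul_mul_smul_comm, mul_comm β, ← smul_add, ← smul_sub]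
    exact Submodule.smul_of_tower_mem _ _ (mul_add_mul_sub_mem_relAugIdeal_pow_three h2 b_mul_a)
  · rw [smul_pow, smul_pow]
    exact Ideal.smul_mul_add_smul_mul_mem _ _
      (sub_one_pow_mul_add_mul_mem_of_commute_sq h4 h2 hab hba k)
  · rw [smul_pow, smul_pow]
    exact Ideal.smul_mul_add_smul_mul_mem _ _
      (sub_one_pow_mul_add_mul_mem_of_mul_eq_mul_inv h4 h2 c_mul_a elC_mem_relAugIdeal_sq k)
  · rw [smul_pow, smul_pow]
    exact Ideal.smul_mul_add_smul_mul_mem _ _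
      (sub_one_pow_mul_add_mul_mem_of_mul_eq_mul_inv h4 h2 c_mul_b elC_mem_relAugIdeal_sq k)

end GrpH

theorem stmt14_general (n m l : ℕ) (h2 : m > l)
    (S : Type) [CommRing S] (hchar : CharP S 4)
    (nn : Ideal S) (h2n : (2 : S) ∈ nn)
    (α β : S) :
    (α • elA S n m l + β • elB S n m l) ^ 2 ^ (m + 1)
      - (α + β) ^ 2 ^ (m + 1) • elA S n m l ^ 2 ^ (m + 1)
      ∈ relAugIdeal S nn (GrpH n m l) ^ (1 + 2 ^ (m + 1)) := by
  have h4 : (4 : S) = 0 := by exact_mod_cast CharP.cast_eq_zero S 4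
  have key := GrpH.smul_add_smul_pow_two_pow_sub_mem (n := n) (m := m) (l := l) h4 h2n α β m
  rw [smul_pow, smul_pow, smul_pow, GrpH.elB_pow_eq_elA_pow h4, GrpH.elC_pow_eq_zero h4 h2,
    smul_zero, add_zero, ← add_smul] at key
  have h2A : (2 * (α * β) ^ 2 ^ m) • elA S n m l ^ 2 ^ (m + 1) ∈
      relAugIdeal S nn (GrpH n m l) ^ (2 ^ (m + 1) + 1) := by
    rw [Algebra.smul_def, map_mul, map_ofNat, mul_assoc]
    exact Ideal.mul_mem_pow_succ (two_mem_relAugIdeal h2n)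
      (Ideal.mul_mem_left _ _ (Ideal.pow_mem_pow (of_sub_one_mem_relAugIdeal _) _))
  rw [add_comm 1, add_pow_two_pow h4]
  convert sub_mem key h2A using 1
  module

theorem stmt14 (n m l : ℕ) (h1 : n > m) (h2 : m > l) (h3 : 2 ≤ l)
    (S : Type) [CommRing S] (hchar : CharP S 4)
    (nn : Ideal S) (hnn : nn.IsMaximal) (h2n : (2 : S) ∈ nn) (h2n2 : (2 : S) ∉ nn ^ 2)
    (α β : S) :
    (α • elA S n m l + β • elB S n m l) ^ 2 ^ (m + 1)
      - (α + β) ^ 2 ^ (m + 1) • elA S n m l ^ 2 ^ (m + 1)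
      ∈ relAugIdeal S nn (GrpH n m l) ^ (1 + 2 ^ (m + 1)) :=
  stmt14_general n m l h2 S hchar nn h2n α β
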